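/- arXiv:1207.2411 — 7 statements merged into one kernel-verified Lean document; each statement's English description precedes it below -/
import Mathlib

section
/- Let V be a real Hilbert space, let A, A' : V → V be bounded linear operators, let m > 0, and assume A is coercive in the sense that ⟨A x, x⟩ ≥ m ‖x‖² for all x ∈ V. Let f ∈ V and suppose P, P' ∈ V satisfy A P = f and A' P' = f. Then ‖P − P'‖ ≤ m^{-1} ‖A − A'‖_{op} ‖P'‖, where ‖·‖_{op} is the operator norm. -/
open scoped RealInnerProductSpace

theorem mul_norm_le_norm_of_mul_sq_le_inner {V : Type*} [NormedAddCommGroup V]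
    [InnerProductSpace ℝ V] {m : ℝ} {x y : V} (h : m * ‖x‖ ^ 2 ≤ ⟪y, x⟫) :
    m * ‖x‖ ≤ ‖y‖ := by
  rcases (norm_nonneg x).eq_or_lt with hx | hx
  · rw [← hx, mul_zero]
    exact norm_nonneg y
  · refine le_of_mul_le_mul_right ?_ hx
    calc m * ‖x‖ * ‖x‖ = m * ‖x‖ ^ 2 := by ring
      _ ≤ ⟪y, x⟫ := h
      _ ≤ ‖y‖ * ‖x‖ := real_inner_le_norm y x

theorem stmt4_general
    {V : Type*} [NormedAddCommGroup V] [InnerProductSpace ℝ V]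
    (A A' : V →L[ℝ] V) (m : ℝ) (hm : 0 < m)
    (hcoer : ∀ x : V, m * ‖x‖ ^ 2 ≤ ⟪A x, x⟫)
    (f P P' : V) (hP : A P = f) (hP' : A' P' = f) :
    ‖P - P'‖ ≤ m⁻¹ * ‖A - A'‖ * ‖P'‖ := by
  have hA_error : A (P - P') = (A' - A) P' := by
    rw [map_sub, sub_apply, hP, hP']
  have hbound : m * ‖P - P'‖ ≤ ‖(A' - A) P'‖ :=
    mul_norm_le_norm_of_mul_sq_le_inner (hA_error ▸ hcoer (P - P'))
  calc ‖P - P'‖ = m⁻¹ * (m * ‖P - P'‖) := by field_simp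
    _ ≤ m⁻¹ * (‖A - A'‖ * ‖P'‖) := by
      rw [norm_sub_rev A A']
      exact mul_le_mul_of_nonneg_left (hbound.trans ((A' - A).le_opNorm P'))
        (inv_nonneg.mpr hm.le)
    _ = m⁻¹ * ‖A - A'‖ * ‖P'‖ := (mul_assoc _ _ _).symm

/-- perturbation bound for coercive operator equations in a real
Hilbert space: if `A P = f`, `A' P' = f` and `⟨Ax, x⟩ ≥ m ‖x‖²`, then
`‖P - P'‖ ≤ m⁻¹ ‖A - A'‖ ‖P'‖`. -/
theorem stmt4
    {V : Type*} [NormedAddCommGroup V] [InnerProductSpace ℝ V]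
    [CompleteSpace V]
    (A A' : V →L[ℝ] V) (m : ℝ) (hm : 0 < m)
    (hcoer : ∀ x : V, m * ‖x‖ ^ 2 ≤ ⟪A x, x⟫)
    (f P P' : V) (hP : A P = f) (hP' : A' P' = f) :
    ‖P - P'‖ ≤ m⁻¹ * ‖A - A'‖ * ‖P'‖ :=
  stmt4_general A A' m hm hcoer f P P' hP hP'
end

section
/- Fix r > 0 and assume: (i) there exist Φ⋆(r) ≥ 0 and a measurable set U(r) ⊆ U with ρ(U(r)) > 0 such that Φ(u;δ) ≤ Φ⋆(r) for all u ∈ U(r) and all δ with |δ| ≤ r; (ii) there exists G_r ∈ L²(U,ρ) with G_r ≥ 0 such that |Φ(u;δ) − Φ(u;δ')| ≤ G_r(u)|δ − δ'| for all u ∈ U and all δ, δ' with |δ|, |δ'| ≤ r. For δ ∈ ℝ^k let ρ^δ be the probability measure on (U,Θ) with density exp(−Φ(u;δ))/Z(δ) with respect to ρ, where Z(δ) = ∫_U exp(−Φ(u;δ)) dρ(u). Then there exists a constant C(r) > 0 such that for all δ, δ' with |δ| ≤ r and |δ'| ≤ r, d_Hell(ρ^δ, ρ^{δ'}) ≤ C(r)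 |δ − δ'|. -/
open MeasureTheory

/-- The Hellinger distance between two probability measures which are
absolutely continuous with respect to `ρ`, expressed through their densities
`f` and `h` with respect to `ρ`:
`d_Hell = ((1/2) ∫ (√f - √h)² dρ)^{1/2}`. -/
noncomputable def dHell {U : Type*} [MeasurableSpace U] (ρ : Measure U)
    (f h : U → ℝ) : ℝ :=
  Real.sqrt ((1 / 2) * ∫ u, (Real.sqrt (f u) - Real.sqrt (h u)) ^ 2 ∂ρ)

/-!
Write the density of `ρ^δ` as `g_δ² / ‖g_δ‖²` with `g_δ = exp (-Φ(·;δ)/2) ∈ L²(ρ)`. Then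
`√2 · d_Hell(ρ^δ, ρ^δ')` is the `L²` distance between the unit vectors `g_δ / ‖g_δ‖` and
`g_δ' / ‖g_δ'‖`, which is at most `2 ‖g_δ - g_δ'‖ / ‖g_δ‖`. As `exp (-·/2)` is `1/2`-Lipschitz on
`[0, ∞)`, `‖g_δ - g_δ'‖ ≤ ‖G_r‖ |δ - δ'| / 2`, while the local bound (i) gives
`‖g_δ‖² = Z(δ) ≥ exp (-Φ⋆) ρ(U(r)) > 0`.
-/
theorem Real.abs_exp_neg_sub_exp_neg_le {x y : ℝ} (hx : 0 ≤ x) (hy : 0 ≤ y) :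
    |Real.exp (-x) - Real.exp (-y)| ≤ |x - y| := by
  wlog hxy : x ≤ y generalizing x y
  · rw [abs_sub_comm, abs_sub_comm x]
    exact this hy hx (le_of_not_ge hxy)
  have hexp : Real.exp (-y) = Real.exp (-x) * Real.exp (x - y) := by
    rw [← Real.exp_add]; ring_nf
  have hle : Real.exp (-y) ≤ Real.exp (-x) := Real.exp_le_exp.2 (by linarith)
  have hshift : Real.exp (x - y) ≤ 1 := Real.exp_le_one_iff.2 (by linarith)
  rw [abs_of_nonneg (sub_nonneg.2 hle), abs_of_nonpos (by linarith), hexp]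
  calc Real.exp (-x) - Real.exp (-x) * Real.exp (x - y)
      = Real.exp (-x) * (1 - Real.exp (x - y)) := by ring
    _ ≤ 1 * (1 - Real.exp (x - y)) :=
        mul_le_mul_of_nonneg_right (Real.exp_le_one_iff.2 (by linarith)) (sub_nonneg.2 hshift)
    _ ≤ -(x - y) := by linarith [Real.add_one_le_exp (x - y)]

theorem norm_inv_norm_smul_sub_inv_norm_smul_le {E : Type*} [NormedAddCommGroup E]
    [NormedSpace ℝ E] {x : E} (y : E) (hx : x ≠ 0) :
    ‖‖x‖⁻¹ • x - ‖y‖⁻¹ • y‖ ≤ 2 * ‖x - y‖ / ‖x‖ := by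
  have hxpos : 0 < ‖x‖ := norm_pos_iff.2 hx
  have hrescale : |‖x‖⁻¹ - ‖y‖⁻¹| * ‖y‖ ≤ ‖x‖⁻¹ * ‖x - y‖ := by
    rcases eq_or_ne y 0 with rfl | hy
    · simp only [norm_zero, mul_zero, sub_zero]; positivity
    have hypos : 0 < ‖y‖ := norm_pos_iff.2 hy
    calc |‖x‖⁻¹ - ‖y‖⁻¹| * ‖y‖ = ‖x‖⁻¹ * |‖x‖ - ‖y‖| := by
          rw [inv_sub_inv hxpos.ne' hypos.ne', abs_div, abs_of_pos (mul_pos hxpos hypos),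
            abs_sub_comm]
          field_simp
      _ ≤ ‖x‖⁻¹ * ‖x - y‖ := by gcongr; exact abs_norm_sub_norm_le x y
  calc ‖‖x‖⁻¹ • x - ‖y‖⁻¹ • y‖ = ‖‖x‖⁻¹ • (x - y) + (‖x‖⁻¹ - ‖y‖⁻¹) • y‖ := by
        rw [smul_sub, sub_smul]; abel_nf
    _ ≤ ‖x‖⁻¹ * ‖x - y‖ + |‖x‖⁻¹ - ‖y‖⁻¹| * ‖y‖ := by
        refine (norm_add_le _ _).trans_eq ?_
        rw [norm_smul, norm_smul, Real.norm_of_nonneg (inv_nonneg.2 hxpos.le), Real.norm_eq_abs]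
    _ ≤ 2 * ‖x - y‖ / ‖x‖ := by
        rw [mul_div_assoc, div_eq_inv_mul]
        linarith

theorem MeasureTheory.MemLp.norm_toLp_sq {α : Type*} [MeasurableSpace α] {μ : Measure α}
    {f : α → ℝ} (hf : MemLp f 2 μ) : ‖hf.toLp f‖ ^ 2 = ∫ a, f a ^ 2 ∂μ := by
  rw [← real_inner_self_eq_norm_sq, L2.inner_def]
  refine integral_congr_ae ?_
  filter_upwards [hf.coeFn_toLp] with a ha
  rw [ha, real_inner_self_eq_norm_sq, Real.norm_eq_abs, sq_abs]

section

variable {U : Type*} [MeasurableSpace U] {ρ : Measure U}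

theorem dHell_sq_le_of_sq_densities {g h : U → ℝ}
    (hg : MemLp g 2 ρ) (hh : MemLp h 2 ρ) (hg0 : ∀ u, 0 ≤ g u) (hh0 : ∀ u, 0 ≤ h u)
    (hZ : 0 < ∫ u, g u ^ 2 ∂ρ) :
    dHell ρ (fun u => g u ^ 2 / ∫ v, g v ^ 2 ∂ρ) (fun u => h u ^ 2 / ∫ v, h v ^ 2 ∂ρ) ^ 2 ≤
      2 * (∫ u, (g u - h u) ^ 2 ∂ρ) / ∫ u, g u ^ 2 ∂ρ := by
  have hsqrt_density {f : U → ℝ} (hf : MemLp f 2 ρ) (hf0 : ∀ u, 0 ≤ f u) (u : U) :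
      √(f u ^ 2 / ∫ v, f v ^ 2 ∂ρ) = ‖hf.toLp f‖⁻¹ * f u := by
    rw [← hf.norm_toLp_sq, Real.sqrt_div' _ (sq_nonneg _), Real.sqrt_sq (hf0 u),
      Real.sqrt_sq (norm_nonneg _), inv_mul_eq_div]
  have hx : hg.toLp g ≠ 0 := by
    intro hx0
    rw [← hg.norm_toLp_sq, hx0, norm_zero] at hZ
    norm_num at hZ
  set x := hg.toLp g
  set y := hh.toLp h
  have hnormalized : ∫ u, (‖x‖⁻¹ * g u - ‖y‖⁻¹ * h u) ^ 2 ∂ρ = ‖‖x‖⁻¹ • x - ‖y‖⁻¹ • y‖ ^ 2 :=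
    (((hg.const_smul ‖x‖⁻¹).sub (hh.const_smul ‖y‖⁻¹)).norm_toLp_sq).symm
  have hdiff : ∫ u, (g u - h u) ^ 2 ∂ρ = ‖x - y‖ ^ 2 := ((hg.sub hh).norm_toLp_sq).symm
  rw [dHell, Real.sq_sqrt (by positivity)]
  simp only [hsqrt_density hg hg0, hsqrt_density hh hh0]
  rw [hnormalized, hdiff, ← hg.norm_toLp_sq]
  calc 1 / 2 * ‖‖x‖⁻¹ • x - ‖y‖⁻¹ • y‖ ^ 2 ≤ 1 / 2 * (2 * ‖x - y‖ / ‖x‖) ^ 2 := by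
        gcongr; exact norm_inv_norm_smul_sub_inv_norm_smul_le y hx
    _ = 2 * ‖x - y‖ ^ 2 / ‖x‖ ^ 2 := by ring

theorem memLp_exp_neg [IsFiniteMeasure ρ] {φ : U → ℝ} (hφ : Measurable φ) (hφ0 : ∀ u, 0 ≤ φ u)
    (p : ENNReal) :
    MemLp (fun u => Real.exp (-φ u)) p ρ :=
  MemLp.of_bound hφ.neg.exp.aestronglyMeasurable 1 <| .of_forall fun u => by
    rw [Real.norm_of_nonneg (Real.exp_pos _).le, Real.exp_le_one_iff, neg_nonpos]
    exact hφ0 u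

theorem exp_neg_mul_measureReal_le_integral_exp_neg [IsFiniteMeasure ρ] {φ : U → ℝ}
    (hφ : Measurable φ) (hφ0 : ∀ u, 0 ≤ φ u) {S : Set U} (hS : MeasurableSet S) {b : ℝ}
    (hb : ∀ u ∈ S, φ u ≤ b) :
    Real.exp (-b) * ρ.real S ≤ ∫ u, Real.exp (-φ u) ∂ρ := by
  have hint : Integrable (fun u => Real.exp (-φ u)) ρ :=
    memLp_one_iff_integrable.1 (memLp_exp_neg hφ hφ0 1)
  calc Real.exp (-b) * ρ.real S = ∫ _ in S, Real.exp (-b) ∂ρ := by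
        rw [setIntegral_const, smul_eq_mul, mul_comm]
    _ ≤ ∫ u in S, Real.exp (-φ u) ∂ρ :=
        setIntegral_mono_on (integrable_const _).integrableOn hint.integrableOn hS
          fun u hu => Real.exp_le_exp.2 (neg_le_neg (hb u hu))
    _ ≤ ∫ u, Real.exp (-φ u) ∂ρ :=
        setIntegral_le_integral hint (.of_forall fun u => (Real.exp_pos _).le)

theorem integral_sq_exp_neg_half_sub_le {φ ψ L : U → ℝ} (hφ0 : ∀ u, 0 ≤ φ u)
    (hψ0 : ∀ u, 0 ≤ ψ u) (hL : Integrable (fun u => L u ^ 2) ρ) (hφψ : ∀ u, |φ u - ψ u| ≤ L u) :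
    ∫ u, (Real.exp (-(φ u / 2)) - Real.exp (-(ψ u / 2))) ^ 2 ∂ρ ≤ (∫ u, L u ^ 2 ∂ρ) / 4 := by
  have hpointwise (u : U) :
      (Real.exp (-(φ u / 2)) - Real.exp (-(ψ u / 2))) ^ 2 ≤ L u ^ 2 / 4 := by
    have hhalf : |Real.exp (-(φ u / 2)) - Real.exp (-(ψ u / 2))| ≤ |L u / 2| := by
      calc _ ≤ |φ u / 2 - ψ u / 2| :=
            Real.abs_exp_neg_sub_exp_neg_le (by linarith [hφ0 u]) (by linarith [hψ0 u])
        _ = |φ u - ψ u| / 2 := by rw [← sub_div, abs_div, abs_two]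
        _ ≤ |L u / 2| := by
            rw [abs_div, abs_two]
            exact div_le_div_of_nonneg_right ((hφψ u).trans (le_abs_self _)) zero_le_two
    calc _ ≤ (L u / 2) ^ 2 := sq_le_sq.2 hhalf
      _ = L u ^ 2 / 4 := by ring
  calc _ ≤ ∫ u, L u ^ 2 / 4 ∂ρ :=
        integral_mono_of_nonneg (.of_forall fun u => sq_nonneg _) (hL.div_const 4)
          (.of_forall hpointwise)
    _ = (∫ u, L u ^ 2 ∂ρ) / 4 := integral_div _ _

end

theorem stmt7_general
    {U : Type*} [MeasurableSpace U]
    (ρ : Measure U) [IsProbabilityMeasure ρ]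
    (k : ℕ)
    (Φ : U → EuclideanSpace ℝ (Fin k) → ℝ)
    (hΦmeas : ∀ δ, Measurable fun u => Φ u δ)
    (hΦnonneg : ∀ u δ, 0 ≤ Φ u δ)
    (r : ℝ)
    (Φstar : ℝ)
    (Ur : Set U) (hUrmeas : MeasurableSet Ur) (hUrpos : 0 < ρ Ur)
    (hbound : ∀ u ∈ Ur, ∀ δ : EuclideanSpace ℝ (Fin k), ‖δ‖ ≤ r → Φ u δ ≤ Φstar)
    (G : U → ℝ) (hG : MemLp G 2 ρ)
    (hLip : ∀ u, ∀ δ δ' : EuclideanSpace ℝ (Fin k), ‖δ‖ ≤ r → ‖δ'‖ ≤ r →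
      |Φ u δ - Φ u δ'| ≤ G u * ‖δ - δ'‖) :
    ∃ C > (0 : ℝ), ∀ δ δ' : EuclideanSpace ℝ (Fin k), ‖δ‖ ≤ r → ‖δ'‖ ≤ r →
      dHell ρ
        (fun u => Real.exp (-Φ u δ) / ∫ v, Real.exp (-Φ v δ) ∂ρ)
        (fun u => Real.exp (-Φ u δ') / ∫ v, Real.exp (-Φ v δ') ∂ρ)
        ≤ C * ‖δ - δ'‖ := by
  set c := Real.exp (-Φstar) * ρ.real Ur
  set M := ∫ u, G u ^ 2 ∂ρ
  have hc : 0 < c :=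
    mul_pos (Real.exp_pos _) (ENNReal.toReal_pos hUrpos.ne' (measure_ne_top ρ Ur))
  refine ⟨√(M / (2 * c)) + 1, by positivity, fun δ δ' hδ hδ' => ?_⟩
  set t := ‖δ - δ'‖
  let g (δ : EuclideanSpace ℝ (Fin k)) (u : U) : ℝ := Real.exp (-(Φ u δ / 2))
  have hsq (δ u) : Real.exp (-Φ u δ) = g δ u ^ 2 := by
    rw [← Real.exp_nat_mul]; ring_nf
  have hg (δ) : MemLp (g δ) 2 ρ :=
    memLp_exp_neg ((hΦmeas δ).div_const 2) (fun u => by linarith [hΦnonneg u δ]) 2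
  have hZ : c ≤ ∫ u, g δ u ^ 2 ∂ρ := by
    simpa only [hsq] using
      exp_neg_mul_measureReal_le_integral_exp_neg (hΦmeas δ) (hΦnonneg · δ) hUrmeas
        (hbound · · δ hδ)
  have hdiff : ∫ u, (g δ u - g δ' u) ^ 2 ∂ρ ≤ M * t ^ 2 / 4 := by
    have hint : ∫ u, (G u * t) ^ 2 ∂ρ = M * t ^ 2 := by
      simp_rw [mul_pow]; exact integral_mul_const _ _
    rw [← hint]
    exact integral_sq_exp_neg_half_sub_le (hΦnonneg · δ) (hΦnonneg · δ')
      (by simpa only [mul_pow] using hG.integrable_sq.mul_const (t ^ 2))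
      (hLip · δ δ' hδ hδ')
  have hHell := dHell_sq_le_of_sq_densities (hg δ) (hg δ') (fun u => (Real.exp_pos _).le)
    (fun u => (Real.exp_pos _).le) (hc.trans_le hZ)
  simp only [hsq]
  calc _ ≤ √(M / (2 * c)) * t := by
        refine le_of_pow_le_pow_left₀ two_ne_zero (by positivity) ?_
        calc _ ≤ 2 * (∫ u, (g δ u - g δ' u) ^ 2 ∂ρ) / ∫ u, g δ u ^ 2 ∂ρ := hHell
          _ ≤ 2 * (M * t ^ 2 / 4) / c := by gcongr
          _ = (√(M / (2 * c)) * t) ^ 2 := by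
            rw [mul_pow, Real.sq_sqrt (by positivity)]; field_simp; ring
    _ ≤ (√(M / (2 * c)) + 1) * t := by gcongr; linarith

/-- local Lipschitz well-posedness of the Bayesian posterior
`dρ^δ/dρ = exp(-Φ(·;δ))/Z(δ)` in the Hellinger distance, under local
boundedness of `Φ` and local Lipschitz continuity in `δ` with an `L²`
Lipschitz-constant function `G_r`. -/
theorem stmt7
    {U : Type*} [MeasurableSpace U]
    (ρ : Measure U) [IsProbabilityMeasure ρ]
    (k : ℕ)
    (Φ : U → EuclideanSpace ℝ (Fin k) → ℝ)
    (hΦmeas : ∀ δ, Measurable fun u => Φ u δ)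
    (hΦnonneg : ∀ u δ, 0 ≤ Φ u δ)
    (r : ℝ) (hr : 0 < r)
    (Φstar : ℝ) (hΦstar : 0 ≤ Φstar)
    (Ur : Set U) (hUrmeas : MeasurableSet Ur) (hUrpos : 0 < ρ Ur)
    (hbound : ∀ u ∈ Ur, ∀ δ : EuclideanSpace ℝ (Fin k), ‖δ‖ ≤ r → Φ u δ ≤ Φstar)
    (G : U → ℝ) (hG : MemLp G 2 ρ) (hGnonneg : ∀ u, 0 ≤ G u)
    (hLip : ∀ u, ∀ δ δ' : EuclideanSpace ℝ (Fin k), ‖δ‖ ≤ r → ‖δ'‖ ≤ r →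
      |Φ u δ - Φ u δ'| ≤ G u * ‖δ - δ'‖) :
    ∃ C > (0 : ℝ), ∀ δ δ' : EuclideanSpace ℝ (Fin k), ‖δ‖ ≤ r → ‖δ'‖ ≤ r →
      dHell ρ
        (fun u => Real.exp (-Φ u δ) / ∫ v, Real.exp (-Φ v δ) ∂ρ)
        (fun u => Real.exp (-Φ u δ') / ∫ v, Real.exp (-Φ v δ') ∂ρ)
        ≤ C * ‖δ - δ'‖ :=
  stmt7_general ρ k Φ hΦmeas hΦnonneg r Φstar Ur hUrmeas hUrpos hbound G hG hLip
end

section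
/- For every u ∈ U and every measurable set A ⊆ U, the independence-sampler kernel satisfies the minorization p(u, A) ≥ exp(−Φ⋆) ρ(A). -/
/-!
Since `0 ≤ Φ ≤ Φ⋆`, the acceptance probability `min 1 (exp (Φ u - Φ v))` is at least
`exp (-Φ⋆)` for every `v`, so the acceptance part of `p(u, A)` is at least `exp (-Φ⋆) ρ(A)`;
the rejection part is nonnegative because the total acceptance probability is at most `1`.
-/

open MeasureTheory

/-- The independence-sampler Metropolis–Hastings transition kernel
`p(u,A) = ∫_A α(u,v) dρ(v) + (1 - ∫_U α(u,v) dρ(v)) 1_A(u)` with acceptance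
probability `α(u,v) = min(1, exp(Φ(u) - Φ(v)))` and proposal distribution `ρ`. -/
noncomputable def indepKernel {U : Type*} [MeasurableSpace U]
    (ρ : Measure U) (Φ : U → ℝ) (u : U) (A : Set U) : ℝ :=
  (∫ v in A, min 1 (Real.exp (Φ u - Φ v)) ∂ρ)
    + (1 - ∫ v, min 1 (Real.exp (Φ u - Φ v)) ∂ρ) *
      A.indicator (fun _ => (1 : ℝ)) u

lemma exp_neg_le_min_one_exp_sub {a b c : ℝ} (ha : 0 ≤ a) (hc : 0 ≤ c) (hb : b ≤ c) :
    Real.exp (-c) ≤ min 1 (Real.exp (a - b)) :=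
  le_min (Real.exp_le_one_iff.2 (neg_nonpos.2 hc)) (Real.exp_le_exp.2 (by linarith))

section IndependenceSampler

variable {U : Type*} [MeasurableSpace U] {ρ : Measure U}

lemma integrable_min_one_exp [IsFiniteMeasure ρ] {g : U → ℝ} (hg : Measurable g) :
    Integrable (fun v => min 1 (Real.exp (g v))) ρ :=
  .of_bound (measurable_const.min hg.exp).aestronglyMeasurable 1 <| .of_forall fun v => by
    rw [Real.norm_of_nonneg (le_min zero_le_one (Real.exp_pos _).le)]
    exact min_le_left _ _

lemma integral_min_one_exp_le_one [IsProbabilityMeasure ρ] (g : U → ℝ) :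
    ∫ v, min 1 (Real.exp (g v)) ∂ρ ≤ 1 := by
  have h := integral_mono_of_nonneg
    (.of_forall fun v => le_min zero_le_one (Real.exp_pos (g v)).le)
    (integrable_const (1 : ℝ) (μ := ρ)) (.of_forall fun v => min_le_left 1 (Real.exp (g v)))
  simpa using h

lemma setIntegral_le_indepKernel [IsProbabilityMeasure ρ] (Φ : U → ℝ) (u : U) (A : Set U) :
    ∫ v in A, min 1 (Real.exp (Φ u - Φ v)) ∂ρ ≤ indepKernel ρ Φ u A :=
  le_add_of_nonneg_right <| mul_nonneg
    (sub_nonneg.2 (integral_min_one_exp_le_one fun v => Φ u - Φ v))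
    (Set.indicator_nonneg (fun _ _ => zero_le_one) u)

end IndependenceSampler

/-- Doeblin minorization of the independence sampler:
`p(u, A) ≥ exp(-Φ⋆) ρ(A)` for every `u` and every measurable `A`. -/
theorem stmt12
    {U : Type*} [MeasurableSpace U]
    (ρ : Measure U) [IsProbabilityMeasure ρ]
    (Φstar : ℝ) (hΦstar : 0 ≤ Φstar)
    (Φ : U → ℝ) (hΦmeas : Measurable Φ)
    (hΦ : ∀ u, 0 ≤ Φ u ∧ Φ u ≤ Φstar) :
    ∀ u : U, ∀ A : Set U, MeasurableSet A →
      Real.exp (-Φstar) * (ρ A).toReal ≤ indepKernel ρ Φ u A := by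
  intro u A hA
  have hα : ∀ v ∈ A, Real.exp (-Φstar) ≤ min 1 (Real.exp (Φ u - Φ v)) := fun v _ =>
    exp_neg_le_min_one_exp_sub (hΦ u).1 hΦstar (hΦ v).2
  calc Real.exp (-Φstar) * ρ.real A
      ≤ ∫ v in A, min 1 (Real.exp (Φ u - Φ v)) ∂ρ :=
        setIntegral_ge_of_const_le_real hA (measure_ne_top ρ A) hα
          (integrable_min_one_exp (measurable_const.sub hΦmeas)).integrableOn
    _ ≤ indepKernel ρ Φ u A := setIntegral_le_indepKernel Φ u A
end

section
/- The independence-sampler kernel p is reversible with respect to the posterior measure π: for all measurable sets A, B ⊆ U, ∫_A p(u, B) dπ(u) = ∫_B p(u, A) dπ(u). In particular π is invariant for p, i.e. ∫_U p(u, A) dπ(u) = π(A) for every measurable A. -/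
/-!
With `g = exp (-Φ)`, the probability flux `g u * α u v = min (g u) (g v)` is symmetric in `u` and
`v`, so by Fubini its integral over `A × B` is symmetric in `A` and `B`. The rejection part of the
kernel only charges the diagonal and contributes an integral over `A ∩ B`. As `π = g ρ / Z`, this is
reversibility; invariance is the case `A = U`, since `p(u, U) = 1`.
-/

open MeasureTheory

/-- The posterior measure `π` with density `exp(-Φ)/Z`, `Z = ∫ exp(-Φ) dρ`,
with respect to the prior `ρ`. -/
noncomputable def posterior {U : Type*} [MeasurableSpace U]
    (ρ : Measure U) (Φ : U → ℝ) : Measure U :=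
  ρ.withDensity fun u =>
    ENNReal.ofReal (Real.exp (-Φ u) / ∫ v, Real.exp (-Φ v) ∂ρ)

open Real

section IndependenceSampler

variable {U : Type*} [MeasurableSpace U] {Φ : U → ℝ}

theorem exp_neg_mul_min_one_exp_sub (a b : ℝ) :
    exp (-a) * min 1 (exp (a - b)) = min (exp (-a)) (exp (-b)) := by
  rw [mul_min_of_nonneg _ _ (exp_nonneg _), mul_one, ← exp_add]
  ring_nf

theorem setIntegral_posterior (ρ : Measure U) [SFinite ρ] (hΦ : Measurable Φ)
    (A : Set U) (f : U → ℝ) :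
    ∫ u in A, f u ∂posterior ρ Φ
      = (∫ v, exp (-Φ v) ∂ρ)⁻¹ * ∫ u in A, exp (-Φ u) * f u ∂ρ := by
  have hZ : 0 ≤ ∫ v, exp (-Φ v) ∂ρ := integral_nonneg fun _ => (exp_pos _).le
  have hdens : Measurable fun u => ENNReal.ofReal (exp (-Φ u) / ∫ v, exp (-Φ v) ∂ρ) := by
    fun_prop
  rw [posterior, setIntegral_withDensity_eq_setIntegral_toReal_smul' A hdens
      (ae_of_all _ fun _ => ENNReal.ofReal_lt_top),
    ← integral_const_mul]
  congr 1 with u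
  rw [ENNReal.toReal_ofReal (div_nonneg (exp_pos _).le hZ), smul_eq_mul]
  ring

theorem exp_neg_mul_indepKernel (ρ : Measure U) [IsProbabilityMeasure ρ] (u : U) (B : Set U) :
    exp (-Φ u) * indepKernel ρ Φ u B
      = ∫ v in B, min (exp (-Φ u)) (exp (-Φ v)) ∂ρ
        + B.indicator (fun u => exp (-Φ u) - ∫ v, min (exp (-Φ u)) (exp (-Φ v)) ∂ρ) u := by
  simp only [indepKernel, ← exp_neg_mul_min_one_exp_sub, integral_const_mul]
  by_cases hu : u ∈ B <;> simp [hu]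
  ring

theorem integrable_exp_neg (μ : Measure U) [IsFiniteMeasure μ] (hΦ : Measurable Φ)
    (hΦ_nonneg : ∀ u, 0 ≤ Φ u) : Integrable (fun u => exp (-Φ u)) μ :=
  .of_bound (by fun_prop) 1 <| ae_of_all _ fun u => by
    simpa [abs_of_pos (exp_pos _)] using hΦ_nonneg u

theorem integrable_min_exp_neg (μ : Measure (U × U)) [IsFiniteMeasure μ] (hΦ : Measurable Φ)
    (hΦ_nonneg : ∀ u, 0 ≤ Φ u) :
    Integrable (fun p : U × U => min (exp (-Φ p.1)) (exp (-Φ p.2))) μ :=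
  .of_bound (by fun_prop) 1 <| ae_of_all _ fun p => by
    rw [norm_of_nonneg (le_min (exp_pos _).le (exp_pos _).le)]
    exact (min_le_left _ _).trans (exp_le_one_iff.2 (neg_nonpos.2 (hΦ_nonneg _)))

theorem setIntegral_exp_neg_mul_indepKernel (ρ : Measure U) [IsProbabilityMeasure ρ]
    (hΦ : Measurable Φ) (hΦ_nonneg : ∀ u, 0 ≤ Φ u) (A : Set U) {B : Set U}
    (hB : MeasurableSet B) :
    ∫ u in A, exp (-Φ u) * indepKernel ρ Φ u B ∂ρ
      = ∫ u in A, ∫ v in B, min (exp (-Φ u)) (exp (-Φ v)) ∂ρ ∂ρ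
        + ∫ u in A ∩ B, exp (-Φ u) - ∫ v, min (exp (-Φ u)) (exp (-Φ v)) ∂ρ ∂ρ := by
  have hflow : Integrable (fun u => ∫ v in B, min (exp (-Φ u)) (exp (-Φ v)) ∂ρ) (ρ.restrict A) :=
    (integrable_min_exp_neg _ hΦ hΦ_nonneg).integral_prod_left
  have hstay : Integrable
      (B.indicator fun u => exp (-Φ u) - ∫ v, min (exp (-Φ u)) (exp (-Φ v)) ∂ρ) (ρ.restrict A) :=
    ((integrable_exp_neg ρ hΦ hΦ_nonneg).sub
      (integrable_min_exp_neg _ hΦ hΦ_nonneg).integral_prod_left).indicator hB |>.restrict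
  simp_rw [exp_neg_mul_indepKernel]
  rw [integral_add hflow hstay, setIntegral_indicator hB]

theorem setIntegral_exp_neg_mul_indepKernel_comm (ρ : Measure U) [IsProbabilityMeasure ρ]
    (hΦ : Measurable Φ) (hΦ_nonneg : ∀ u, 0 ≤ Φ u) {A B : Set U} (hA : MeasurableSet A)
    (hB : MeasurableSet B) :
    ∫ u in A, exp (-Φ u) * indepKernel ρ Φ u B ∂ρ
      = ∫ u in B, exp (-Φ u) * indepKernel ρ Φ u A ∂ρ := by
  rw [setIntegral_exp_neg_mul_indepKernel ρ hΦ hΦ_nonneg A hB,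
    setIntegral_exp_neg_mul_indepKernel ρ hΦ hΦ_nonneg B hA, Set.inter_comm,
    integral_integral_swap (integrable_min_exp_neg _ hΦ hΦ_nonneg)]
  simp only [min_comm]

theorem indepKernel_univ (ρ : Measure U) [IsProbabilityMeasure ρ] (u : U) :
    indepKernel ρ Φ u Set.univ = 1 := by
  simp [indepKernel]

end IndependenceSampler

theorem stmt13_general
    {U : Type*} [MeasurableSpace U]
    (ρ : Measure U) [IsProbabilityMeasure ρ]
    (Φstar : ℝ)
    (Φ : U → ℝ) (hΦmeas : Measurable Φ)
    (hΦ : ∀ u, 0 ≤ Φ u ∧ Φ u ≤ Φstar) :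
    (∀ A B : Set U, MeasurableSet A → MeasurableSet B →
      ∫ u in A, indepKernel ρ Φ u B ∂(posterior ρ Φ)
        = ∫ u in B, indepKernel ρ Φ u A ∂(posterior ρ Φ)) ∧
    (∀ A : Set U, MeasurableSet A →
      ∫ u, indepKernel ρ Φ u A ∂(posterior ρ Φ)
        = ((posterior ρ Φ) A).toReal) := by
  have reversible : ∀ A B : Set U, MeasurableSet A → MeasurableSet B →
      ∫ u in A, indepKernel ρ Φ u B ∂(posterior ρ Φ)
        = ∫ u in B, indepKernel ρ Φ u A ∂(posterior ρ Φ) := fun A B hA hB => by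
    rw [setIntegral_posterior ρ hΦmeas, setIntegral_posterior ρ hΦmeas,
      setIntegral_exp_neg_mul_indepKernel_comm ρ hΦmeas (fun u => (hΦ u).1) hA hB]
  refine ⟨reversible, fun A hA => ?_⟩
  rw [← setIntegral_univ, reversible _ _ .univ hA]
  simp [indepKernel_univ, Measure.real]

/-- the independence sampler is reversible with respect to the
posterior `π`, and in particular `π` is invariant for it. -/
theorem stmt13
    {U : Type*} [MeasurableSpace U]
    (ρ : Measure U) [IsProbabilityMeasure ρ]
    (Φstar : ℝ) (hΦstar : 0 ≤ Φstar)
    (Φ : U → ℝ) (hΦmeas : Measurable Φ)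
    (hΦ : ∀ u, 0 ≤ Φ u ∧ Φ u ≤ Φstar) :
    (∀ A B : Set U, MeasurableSet A → MeasurableSet B →
      ∫ u in A, indepKernel ρ Φ u B ∂(posterior ρ Φ)
        = ∫ u in B, indepKernel ρ Φ u A ∂(posterior ρ Φ)) ∧
    (∀ A : Set U, MeasurableSet A →
      ∫ u, indepKernel ρ Φ u A ∂(posterior ρ Φ)
        = ((posterior ρ Φ) A).toReal) :=
  stmt13_general ρ Φstar Φ hΦmeas hΦ
end

section
/- Let (U,Θ) be a measurable space, κ a Markov (probability) transition kernel on U, ρ a probability measure on (U,Θ), and ε ∈ (0,1] such that κ(u, A) ≥ ε ρ(A) for every u ∈ U and every measurable A (Doeblin minorization). Let π be a probability measure invariant for κ, i.e. ∫_U κ(u, A) dπ(u) = π(A) for all measurable A. Then for every n ∈ ℕ and every u ∈ U, the n-step kernel κⁿ (defined by κ¹ = κ and κ^{n+1}(u, A) = ∫_U κ(v, A) κⁿ(u, dv)) satisfies ‖κⁿ(u, ·) − π‖_TV ≤ 2(1 − ε)ⁿ. -/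
/-!
Write `κ v = c • ρ + r v` with `c = ε`, where the residual `r v` has mass `1 - c`. The common part
`c • ρ` cancels in `μκ - νκ`, so if `μ` and `ν` differ by at most `D` on every set, then `μκ` and
`νκ` differ by at most `(1 - c) D`. Starting from the trivial bound `1` and using `πκ = π`,
induction gives `|κⁿ(u, A) - π(A)| ≤ (1 - ε)ⁿ`.
-/

open MeasureTheory ProbabilityTheory
open scoped ProbabilityTheory

/-- The `n`-step transition kernel: `kiter κ 0 = id` (the trivial `0`-step
kernel), `kiter κ 1 = κ`, and
`kiter κ (n+1) (u, A) = ∫ κ(v, A) (kiter κ n)(u, dv)`. -/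
noncomputable def kiter {U : Type*} [MeasurableSpace U]
    (κ : Kernel U U) : ℕ → Kernel U U
  | 0 => Kernel.id
  | n + 1 => κ ∘ₖ kiter κ n

open Set
open scoped ENNReal

section Contraction

variable {α : Type*} [MeasurableSpace α]

/-- Layer cake: integrate the set inequality over the superlevel sets `{t < f}`, `0 < t < c`. -/
theorem lintegral_le_lintegral_add_mul_of_forall_le_add {μ ν : Measure α} {f : α → ℝ≥0∞}
    (hf : Measurable f) {c : ℝ≥0∞} (hc : c ≠ ∞) (hfc : ∀ x, f x ≤ c) {D : ℝ≥0∞}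
    (h : ∀ s, MeasurableSet s → μ s ≤ ν s + D) :
    ∫⁻ x, f x ∂μ ≤ ∫⁻ x, f x ∂ν + c * D := by
  have hf_eq : f = fun x => ENNReal.ofReal (f x).toReal :=
    funext fun x => (ENNReal.ofReal_toReal (ne_top_of_le_ne_top hc (hfc x))).symm
  have hg : Measurable fun x => (f x).toReal := hf.ennreal_toReal
  have hg0 : 0 ≤ fun x => (f x).toReal := fun x => ENNReal.toReal_nonneg
  rw [hf_eq, lintegral_eq_lintegral_meas_lt μ (.of_forall hg0) hg.aemeasurable,
    lintegral_eq_lintegral_meas_lt ν (.of_forall hg0) hg.aemeasurable]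
  calc ∫⁻ t in Ioi 0, μ {x | t < (f x).toReal}
      ≤ ∫⁻ t in Ioi 0, (ν {x | t < (f x).toReal} + (Ioo 0 c.toReal).indicator (fun _ => D) t) := by
        refine setLIntegral_mono' measurableSet_Ioi fun t ht => ?_
        by_cases htc : t < c.toReal
        · rw [indicator_of_mem (show t ∈ Ioo 0 c.toReal from ⟨ht, htc⟩)]
          exact h _ (measurableSet_lt measurable_const hg)
        · have hempty : {x | t < (f x).toReal} = ∅ := eq_empty_of_forall_notMem fun x hx =>
            htc (hx.trans_le (ENNReal.toReal_mono hc (hfc x)))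
          simp [hempty]
    _ = (∫⁻ t in Ioi 0, ν {x | t < (f x).toReal}) + c * D := by
        rw [lintegral_add_right _ (measurable_const.indicator measurableSet_Ioo),
          lintegral_indicator_const measurableSet_Ioo, Measure.restrict_apply measurableSet_Ioo,
          inter_eq_left.mpr Ioo_subset_Ioi_self, Real.volume_Ioo, sub_zero,
          ENNReal.ofReal_toReal hc, mul_comm]

variable {κ : Kernel α α} {ρ : Measure α} {c : ℝ≥0∞}

theorem sub_mul_le_one_sub_of_minorization [IsMarkovKernel κ] [IsProbabilityMeasure ρ]
    (hminor : ∀ v s, MeasurableSet s → c * ρ s ≤ κ v s) (v : α) {s : Set α}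
    (hs : MeasurableSet s) : κ v s - c * ρ s ≤ 1 - c := by
  have hc : c ≤ 1 := by simpa using hminor v univ MeasurableSet.univ
  have hfin : c * ρ sᶜ ≠ ∞ := ENNReal.mul_ne_top (ne_top_of_le_ne_top ENNReal.one_ne_top hc)
    (measure_ne_top ρ _)
  rw [tsub_le_iff_right, ← ENNReal.add_le_add_iff_right hfin]
  calc κ v s + c * ρ sᶜ ≤ κ v s + κ v sᶜ := add_le_add_right (hminor v _ hs.compl) _
    _ = 1 - c + c := by rw [measure_add_measure_compl hs, measure_univ, tsub_add_cancel_of_le hc]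
    _ = 1 - c + c * ρ s + c * ρ sᶜ := by
        rw [add_assoc, ← mul_add, measure_add_measure_compl hs, measure_univ, mul_one]

theorem lintegral_le_lintegral_add_of_minorization [IsMarkovKernel κ] [IsProbabilityMeasure ρ]
    (hminor : ∀ v s, MeasurableSet s → c * ρ s ≤ κ v s)
    {μ ν : Measure α} [IsProbabilityMeasure μ] [IsProbabilityMeasure ν] {D : ℝ≥0∞}
    (h : ∀ s, MeasurableSet s → μ s ≤ ν s + D) {s : Set α} (hs : MeasurableSet s) :
    ∫⁻ v, κ v s ∂μ ≤ ∫⁻ v, κ v s ∂ν + (1 - c) * D := by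
  have hsplit : ∀ m : Measure α, IsProbabilityMeasure m →
      ∫⁻ v, κ v s ∂m = ∫⁻ v, (κ v s - c * ρ s) ∂m + c * ρ s := fun m _ => by
    calc ∫⁻ v, κ v s ∂m = ∫⁻ v, (κ v s - c * ρ s + c * ρ s) ∂m :=
          lintegral_congr fun v => (tsub_add_cancel_of_le (hminor v s hs)).symm
      _ = ∫⁻ v, (κ v s - c * ρ s) ∂m + c * ρ s := by
          rw [lintegral_add_right _ measurable_const, lintegral_const, measure_univ, mul_one]
  rw [hsplit μ inferInstance, hsplit ν inferInstance, add_right_comm]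
  gcongr
  exact lintegral_le_lintegral_add_mul_of_forall_le_add
    ((κ.measurable_coe hs).sub measurable_const) (by simp)
    (fun v => sub_mul_le_one_sub_of_minorization hminor v hs) h

end Contraction

instance isMarkovKernel_kiter {U : Type*} [MeasurableSpace U] (κ : Kernel U U)
    [IsMarkovKernel κ] (n : ℕ) : IsMarkovKernel (kiter κ n) := by
  induction n with
  | zero => exact inferInstanceAs (IsMarkovKernel Kernel.id)
  | succ n ih => exact inferInstanceAs (IsMarkovKernel (κ ∘ₖ kiter κ n))

theorem kiter_le_add_and_le_add_of_minorization {U : Type*} [MeasurableSpace U]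
    {κ : Kernel U U} [IsMarkovKernel κ] {ρ : Measure U} [IsProbabilityMeasure ρ] {c : ℝ≥0∞}
    (hminor : ∀ v s, MeasurableSet s → c * ρ s ≤ κ v s)
    {π : Measure U} [IsProbabilityMeasure π]
    (hinv : ∀ s, MeasurableSet s → ∫⁻ v, κ v s ∂π = π s) (n : ℕ) (u : U) {s : Set U}
    (hs : MeasurableSet s) :
    kiter κ n u s ≤ π s + (1 - c) ^ n ∧ π s ≤ kiter κ n u s + (1 - c) ^ n := by
  induction n generalizing s with
  | zero =>
    rw [pow_zero]
    exact ⟨prob_le_one.trans le_add_self, prob_le_one.trans le_add_self⟩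
  | succ n ih =>
    have hstep : kiter κ (n + 1) u s = ∫⁻ v, κ v s ∂(kiter κ n u) :=
      Kernel.comp_apply' _ _ _ hs
    rw [hstep, ← hinv s hs, pow_succ']
    exact ⟨lintegral_le_lintegral_add_of_minorization hminor (fun t ht => (ih ht).1) hs,
      lintegral_le_lintegral_add_of_minorization hminor (fun t ht => (ih ht).2) hs⟩

theorem ENNReal.abs_toReal_sub_le {a b d : ℝ≥0∞} (ha : a ≠ ∞) (hb : b ≠ ∞) (hd : d ≠ ∞)
    (hab : a ≤ b + d) (hba : b ≤ a + d) : |a.toReal - b.toReal| ≤ d.toReal := by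
  have h₁ := ENNReal.toReal_mono (by finiteness) hab
  have h₂ := ENNReal.toReal_mono (by finiteness) hba
  rw [ENNReal.toReal_add hb hd] at h₁
  rw [ENNReal.toReal_add ha hd] at h₂
  exact abs_sub_le_iff.mpr ⟨by linarith, by linarith⟩

/-- geometric ergodicity under a Doeblin minorization condition:
if `κ(u, ·) ≥ ε ρ` for all `u` and `π` is invariant for `κ`, then
`‖κⁿ(u, ·) − π‖_TV ≤ 2 (1 − ε)ⁿ`, i.e. `|κⁿ(u, A) − π(A)| ≤ (1 − ε)ⁿ` for
every measurable `A`. -/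
theorem stmt14
    {U : Type*} [MeasurableSpace U]
    (κ : Kernel U U) [IsMarkovKernel κ]
    (ρ : Measure U) [IsProbabilityMeasure ρ]
    (ε : ℝ) (hε0 : 0 < ε) (hε1 : ε ≤ 1)
    (hminor : ∀ u : U, ∀ A : Set U, MeasurableSet A →
      ENNReal.ofReal ε * ρ A ≤ κ u A)
    (π : Measure U) [IsProbabilityMeasure π]
    (hinv : ∀ A : Set U, MeasurableSet A → ∫⁻ u, κ u A ∂π = π A) :
    ∀ n : ℕ, 1 ≤ n → ∀ u : U, ∀ A : Set U, MeasurableSet A →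
      |(kiter κ n u A).toReal - (π A).toReal| ≤ (1 - ε) ^ n := by
  intro n _ u A hA
  obtain ⟨hle, hge⟩ := kiter_le_add_and_le_add_of_minorization hminor hinv n u hA
  have hrate : ((1 - ENNReal.ofReal ε) ^ n).toReal = (1 - ε) ^ n := by
    rw [ENNReal.toReal_pow, ← ENNReal.ofReal_one, ← ENNReal.ofReal_sub _ hε0.le,
      ENNReal.toReal_ofReal (sub_nonneg.mpr hε1)]
  exact hrate ▸ ENNReal.abs_toReal_sub_le (measure_ne_top _ _) (measure_ne_top _ _)
    (by finiteness) hle hge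
end

section
/- Let (U,Θ) be a measurable space, κ a Markov transition kernel on U, ρ a probability measure, and ε ∈ (0,1] with κ(u, A) ≥ ε ρ(A) for all u ∈ U and measurable A. Let π be a probability measure invariant for κ, and let (X_k)_{k≥0} be the canonical Markov chain on U^ℕ with initial distribution π and transition kernel κ (its law being the Ionescu–Tulcea measure). Then for every bounded measurable g : U → ℝ with ∫_U g dπ = 0 and every M ∈ ℕ, E[ |∑_{k=1}^M g(X_k)|² ] ≤ C M (sup_{u∈U} |g(u)|)², where C = 1 + 4/ε (in particular C depends only on ε). -/
/-!
Doeblin's condition `κ u ≥ ε ρ` splits every `κ u` as `ε ρ + ν_u` with `ν_u` of mass `1 - ε`, so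
one step of `κ` shrinks the oscillation of a bounded function by the factor `1 - ε`. Hence `κⁿ g`
lies within `(1 - ε)ⁿ sup |g|` of a constant, and since invariance gives `∫ κⁿ g dπ = ∫ g dπ = 0`,
`|κⁿ g| ≤ 2 (1 - ε)ⁿ sup |g|`. By the Markov property and stationarity,
`E[g(X_k) g(X_{k+n})] = ∫ g · κⁿ g dπ`, so the correlations decay geometrically in `|k - l|`, and
expanding the square, each of the `M` rows of `∑_{k,l} E[g(X_k) g(X_l)]` is at most
`2 (sup |g|)² · 2/ε`.
-/

open MeasureTheory ProbabilityTheory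
open scoped Finset

namespace ProbabilityTheory.Kernel

variable {α : Type*} [MeasurableSpace α]

lemma pow_zero_eq_id (κ : Kernel α α) : κ ^ 0 = Kernel.id := rfl

lemma pow_succ_eq_comp (κ : Kernel α α) (n : ℕ) : κ ^ (n + 1) = (κ ^ n) ∘ₖ κ := rfl

instance isMarkovKernel_pow (κ : Kernel α α) [IsMarkovKernel κ] :
    ∀ n : ℕ, IsMarkovKernel (κ ^ n)
  | 0 => inferInstanceAs (IsMarkovKernel Kernel.id)
  | n + 1 => by
    have := isMarkovKernel_pow κ n
    rw [pow_succ_eq_comp]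
    infer_instance

lemma invariant_of_forall_lintegral_eq {κ : Kernel α α} {μ : Measure α}
    (h : ∀ A, MeasurableSet A → ∫⁻ u, κ u A ∂μ = μ A) : Invariant κ μ :=
  Measure.ext fun A hA => by rw [Measure.bind_apply hA κ.aemeasurable, h A hA]

lemma Invariant.pow {κ : Kernel α α} {μ : Measure α} (hκ : Invariant κ μ) :
    ∀ n : ℕ, Invariant (κ ^ n) μ
  | 0 => Measure.id_comp
  | n + 1 => (hκ.pow n).comp hκ

end ProbabilityTheory.Kernel

namespace MeasureTheory.Measure

variable {α β E : Type*} [MeasurableSpace α] [MeasurableSpace β]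
  [NormedAddCommGroup E] [NormedSpace ℝ E]

lemma integral_comp {κ : Kernel α β} [IsSFiniteKernel κ] {μ : Measure α} [SFinite μ]
    {f : β → E} (hf : Integrable f (κ ∘ₘ μ)) :
    ∫ y, f y ∂(κ ∘ₘ μ) = ∫ x, ∫ y, f y ∂κ x ∂μ := by
  rw [comp_eq_comp_const_apply] at hf ⊢
  rw [Kernel.integral_comp hf, Kernel.const_apply]

end MeasureTheory.Measure

section BoundedFunctions

lemma abs_mul_le_of_forall_abs_le {ι : Type*} {f : ι → ℝ} {B : ℝ} (h : ∀ x, |f x| ≤ B)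
    (x y : ι) : |f x * f y| ≤ B * B := by
  rw [abs_mul]
  exact mul_le_mul (h x) (h y) (abs_nonneg _) ((abs_nonneg _).trans (h x))

variable {α : Type*} [MeasurableSpace α] {μ : Measure α} {f : α → ℝ} {B : ℝ}

lemma integrable_of_forall_abs_le [IsFiniteMeasure μ] (hf : AEStronglyMeasurable f μ)
    (h : ∀ x, |f x| ≤ B) : Integrable f μ :=
  .of_bound hf B (.of_forall fun x => (Real.norm_eq_abs _).trans_le (h x))

lemma abs_integral_le_mul_measureReal_univ [IsFiniteMeasure μ] (h : ∀ x, |f x| ≤ B) :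
    |∫ x, f x ∂μ| ≤ B * μ.real Set.univ :=
  norm_integral_le_of_norm_le_const (.of_forall fun x => (Real.norm_eq_abs _).trans_le (h x))

lemma abs_integral_le_of_forall_abs_le [IsProbabilityMeasure μ] (h : ∀ x, |f x| ≤ B) :
    |∫ x, f x ∂μ| ≤ B := by
  simpa using abs_integral_le_mul_measureReal_univ (μ := μ) h

end BoundedFunctions

namespace ProbabilityTheory.Kernel

variable {α : Type*} [MeasurableSpace α] {κ : Kernel α α} [IsMarkovKernel κ]
  {ρ : Measure α} [IsProbabilityMeasure ρ] {ε : ℝ}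

lemma integral_integral_pow_of_invariant {π : Measure α} [SFinite π]
    (hπ : Invariant κ π) {g : α → ℝ} (hg : Integrable g π) (n : ℕ) :
    ∫ u, ∫ v, g v ∂(κ ^ n) u ∂π = ∫ v, g v ∂π := by
  rw [← (hπ.pow n).def] at hg
  rw [← Measure.integral_comp hg, (hπ.pow n).def]

-- `κ u = ε ρ + ν` with `ν` of mass `1 - ε`.
lemma abs_integral_sub_mul_integral_le_of_minorization (hε0 : 0 ≤ ε) (hε1 : ε ≤ 1)
    (hminor : ∀ u, ENNReal.ofReal ε • ρ ≤ κ u) {h : α → ℝ} (hh : Measurable h) {B : ℝ}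
    (hB : ∀ v, |h v| ≤ B) (u : α) :
    |∫ v, h v ∂κ u - ε * ∫ v, h v ∂ρ| ≤ (1 - ε) * B := by
  set ν := κ u - ENNReal.ofReal ε • ρ
  have := isFiniteMeasure_of_le (κ u) (hminor u)
  have hsplit : κ u = ν + ENNReal.ofReal ε • ρ := (Measure.sub_add_cancel_of_le (hminor u)).symm
  have hν : ν.real Set.univ = 1 - ε := by
    rw [measureReal_def, Measure.sub_apply .univ (hminor u)]
    simp [ENNReal.toReal_sub_of_le (ENNReal.ofReal_le_one.2 hε1), hε0]
  have hhκ : ∫ v, h v ∂κ u = ∫ v, h v ∂ν + ε * ∫ v, h v ∂ρ := by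
    rw [hsplit, integral_add_measure (integrable_of_forall_abs_le hh.aestronglyMeasurable hB)
      (integrable_of_forall_abs_le hh.aestronglyMeasurable hB), integral_smul_measure,
      ENNReal.toReal_ofReal hε0, smul_eq_mul]
  rw [hhκ, add_sub_cancel_right, ← hν, mul_comm]
  exact abs_integral_le_mul_measureReal_univ hB

lemma exists_abs_integral_pow_sub_le_of_minorization (hε0 : 0 ≤ ε) (hε1 : ε ≤ 1)
    (hminor : ∀ u, ENNReal.ofReal ε • ρ ≤ κ u) {g : α → ℝ} (hg : Measurable g) {B : ℝ}
    (hB : ∀ v, |g v| ≤ B) (n : ℕ) :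
    ∃ c : ℝ, ∀ u, |∫ v, g v ∂(κ ^ n) u - c| ≤ (1 - ε) ^ n * B := by
  induction n with
  | zero =>
    refine ⟨0, fun u => ?_⟩
    rw [pow_zero_eq_id, Kernel.id_apply, integral_dirac' g u hg.stronglyMeasurable, sub_zero,
      pow_zero, one_mul]
    exact hB u
  | succ n ih =>
    obtain ⟨c, hc⟩ := ih
    have hF : Measurable fun w => ∫ v, g v ∂(κ ^ n) w :=
      (hg.stronglyMeasurable.integral_kernel (κ := κ ^ n)).measurable
    set h : α → ℝ := fun w => ∫ v, g v ∂(κ ^ n) w - c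
    refine ⟨c + ε * ∫ w, h w ∂ρ, fun u => ?_⟩
    have hpow : ∫ v, g v ∂(κ ^ (n + 1)) u = ∫ w, h w ∂κ u + c := by
      rw [pow_succ_eq_comp, Kernel.integral_comp
        (integrable_of_forall_abs_le hg.aestronglyMeasurable hB),
        integral_sub (integrable_of_forall_abs_le hF.aestronglyMeasurable
          fun w => abs_integral_le_of_forall_abs_le hB) (integrable_const c)]
      simp
    calc |∫ v, g v ∂(κ ^ (n + 1)) u - (c + ε * ∫ w, h w ∂ρ)|
        = |∫ w, h w ∂κ u - ε * ∫ w, h w ∂ρ| := by rw [hpow]; ring_nf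
      _ ≤ (1 - ε) * ((1 - ε) ^ n * B) :=
        abs_integral_sub_mul_integral_le_of_minorization hε0 hε1 hminor (hF.sub_const c) hc u
      _ = (1 - ε) ^ (n + 1) * B := by ring

-- The constant that `κ ^ n g` is close to is itself small, as `κ ^ n g` has `π`-mean zero.
lemma abs_integral_pow_apply_le_of_minorization (hε0 : 0 ≤ ε) (hε1 : ε ≤ 1)
    (hminor : ∀ u, ENNReal.ofReal ε • ρ ≤ κ u) {π : Measure α} [IsProbabilityMeasure π]
    (hπ : Invariant κ π) {g : α → ℝ} (hg : Measurable g) {B : ℝ} (hB : ∀ v, |g v| ≤ B)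
    (hg0 : ∫ v, g v ∂π = 0) (n : ℕ) (u : α) :
    |∫ v, g v ∂(κ ^ n) u| ≤ 2 * ((1 - ε) ^ n * B) := by
  obtain ⟨c, hc⟩ := exists_abs_integral_pow_sub_le_of_minorization hε0 hε1 hminor hg hB n
  have hF : Integrable (fun w => ∫ v, g v ∂(κ ^ n) w) π :=
    integrable_of_forall_abs_le
      (hg.stronglyMeasurable.integral_kernel (κ := κ ^ n)).aestronglyMeasurable
      fun w => abs_integral_le_of_forall_abs_le hB
  have hc_small : |c| ≤ (1 - ε) ^ n * B := by
    have hmean : ∫ w, (c - ∫ v, g v ∂(κ ^ n) w) ∂π = c := by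
      rw [integral_sub (integrable_const c) hF, integral_integral_pow_of_invariant hπ
        (integrable_of_forall_abs_le hg.aestronglyMeasurable hB), hg0]
      simp
    rw [← hmean]
    exact abs_integral_le_of_forall_abs_le fun w => abs_sub_comm c _ ▸ hc w
  linarith [hc u, abs_sub_abs_le_abs_sub (∫ v, g v ∂(κ ^ n) u) c]

end ProbabilityTheory.Kernel

section MarkovProperty

variable {α Ω : Type*} [MeasurableSpace α]

lemma measurableSet_iSup_comap_preimage (X : ℕ → Ω → α) {j k : ℕ} (hjk : j ≤ k) {A : Set α}
    (hA : MeasurableSet A) :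
    MeasurableSet[⨆ i ∈ Finset.range (k + 1), MeasurableSpace.comap (X i) inferInstance]
      (X j ⁻¹' A) :=
  le_iSup₂ (f := fun i (_ : i ∈ Finset.range (k + 1)) =>
    MeasurableSpace.comap (X i) inferInstance) j (Finset.mem_range.2 (by omega)) _ ⟨A, hA, rfl⟩

variable [MeasurableSpace Ω]

def HasMarkovProperty (κ : Kernel α α) (P : Measure Ω) (X : ℕ → Ω → α) : Prop :=
  ∀ (k : ℕ) (A : Set α), MeasurableSet A → ∀ B : Set Ω,
    MeasurableSet[⨆ i ∈ Finset.range (k + 1), MeasurableSpace.comap (X i) inferInstance] B →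
    ∫⁻ ω in B, κ (X k ω) A ∂P = P (B ∩ X (k + 1) ⁻¹' A)

namespace HasMarkovProperty

variable {κ : Kernel α α} [IsMarkovKernel κ] {P : Measure Ω} [IsFiniteMeasure P]
  {X : ℕ → Ω → α}

lemma map_prodMk_add (hX : HasMarkovProperty κ P X) (hXm : ∀ k, Measurable (X k)) (k n : ℕ) :
    P.map (fun ω => (X k ω, X (k + n) ω)) = P.map (X k) ⊗ₘ (κ ^ n) := by
  induction n with
  | zero =>
    rw [Kernel.pow_zero_eq_id, Measure.compProd_id, Measure.map_map measurable_diag (hXm k)]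
    rfl
  | succ n ih =>
    refine Measure.ext_prod fun {A A'} hA hA' => ?_
    have hκA' : Measurable fun p : α × α => κ p.2 A' :=
      (κ.measurable_coe hA').comp measurable_snd
    calc P.map (fun ω => (X k ω, X (k + (n + 1)) ω)) (A ×ˢ A')
        = P (X k ⁻¹' A ∩ X (k + n + 1) ⁻¹' A') :=
          Measure.map_apply ((hXm k).prodMk (hXm _)) (hA.prod hA')
      _ = ∫⁻ ω in X k ⁻¹' A, κ (X (k + n) ω) A' ∂P :=
          (hX (k + n) A' hA' _ (measurableSet_iSup_comap_preimage X (by omega) hA)).symm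
      _ = ∫⁻ p in A ×ˢ Set.univ, κ p.2 A' ∂(P.map (fun ω => (X k ω, X (k + n) ω))) := by
          rw [setLIntegral_map (hA.prod .univ) hκA' ((hXm k).prodMk (hXm _)),
            Set.mk_preimage_prod, Set.preimage_univ, Set.inter_univ]
      _ = ∫⁻ x in A, ∫⁻ y, κ y A' ∂(κ ^ n) x ∂(P.map (X k)) := by
          rw [ih, Measure.setLIntegral_compProd hκA' hA .univ]
          simp only [Measure.restrict_univ]
      _ = (P.map (X k) ⊗ₘ (κ ^ (n + 1))) (A ×ˢ A') := by
          simp_rw [Measure.compProd_apply_prod hA hA',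
            Kernel.pow_succ_apply_eq_lintegral κ n _ hA']

lemma map_eq_of_invariant (hX : HasMarkovProperty κ P X) (hXm : ∀ k, Measurable (X k))
    {π : Measure α} (h0 : P.map (X 0) = π) (hπ : κ.Invariant π) (k : ℕ) : P.map (X k) = π := by
  have := congrArg Measure.snd (hX.map_prodMk_add hXm 0 k)
  rwa [Measure.snd_map_prodMk (hXm 0), zero_add, Measure.snd_compProd, h0, (hπ.pow k).def] at this

lemma integral_comp_mul_comp_add (hX : HasMarkovProperty κ P X) (hXm : ∀ k, Measurable (X k))
    {g : α → ℝ} (hg : Measurable g) {B : ℝ} (hB : ∀ v, |g v| ≤ B) (k n : ℕ) :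
    ∫ ω, g (X k ω) * g (X (k + n) ω) ∂P = ∫ x, g x * ∫ y, g y ∂(κ ^ n) x ∂(P.map (X k)) := by
  have hpair : Measurable fun ω => (X k ω, X (k + n) ω) := (hXm k).prodMk (hXm _)
  have hgg : Measurable fun p : α × α => g p.1 * g p.2 :=
    (hg.comp measurable_fst).mul (hg.comp measurable_snd)
  rw [← integral_map (f := fun p : α × α => g p.1 * g p.2) hpair.aemeasurable
    hgg.aestronglyMeasurable, hX.map_prodMk_add hXm, Measure.integral_compProd
    (integrable_of_forall_abs_le hgg.aestronglyMeasurable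
      fun p => abs_mul_le_of_forall_abs_le hB _ _)]
  simp_rw [integral_const_mul]

lemma abs_integral_mul_le_of_minorization (hX : HasMarkovProperty κ P X)
    (hXm : ∀ k, Measurable (X k)) {ρ : Measure α}
    [IsProbabilityMeasure ρ] {ε : ℝ} (hε0 : 0 ≤ ε) (hε1 : ε ≤ 1)
    (hminor : ∀ u, ENNReal.ofReal ε • ρ ≤ κ u) {π : Measure α} [IsProbabilityMeasure π]
    (hπ : κ.Invariant π) (h0 : P.map (X 0) = π) {g : α → ℝ} (hg : Measurable g) {B : ℝ}
    (hB : ∀ v, |g v| ≤ B) (hg0 : ∫ v, g v ∂π = 0) (k l : ℕ) :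
    |∫ ω, g (X k ω) * g (X l ω) ∂P| ≤ 2 * B ^ 2 * (1 - ε) ^ Nat.dist k l := by
  wlog hkl : k ≤ l generalizing k l
  · simpa only [mul_comm (g (X k _)), Nat.dist_comm] using this l k (by omega)
  obtain ⟨n, rfl⟩ := Nat.exists_eq_add_of_le hkl
  rw [Nat.dist_eq_sub_of_le hkl, Nat.add_sub_cancel_left, hX.integral_comp_mul_comp_add hXm hg hB,
    hX.map_eq_of_invariant hXm h0 hπ]
  refine abs_integral_le_of_forall_abs_le fun x => ?_
  rw [abs_mul]
  calc |g x| * |∫ y, g y ∂(κ ^ n) x| ≤ B * (2 * ((1 - ε) ^ n * B)) :=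
        mul_le_mul (hB x) (Kernel.abs_integral_pow_apply_le_of_minorization hε0 hε1 hminor hπ hg
          hB hg0 n x) (abs_nonneg _) ((abs_nonneg _).trans (hB x))
    _ = 2 * B ^ 2 * (1 - ε) ^ n := by ring

end HasMarkovProperty

end MarkovProperty

section GeometricSums

variable {r : ℝ}

lemma sum_pow_le_of_injOn {ι : Type*} (hr0 : 0 ≤ r) (hr1 : r < 1) {s : Finset ι} {e : ι → ℕ}
    (he : Set.InjOn e s) : ∑ i ∈ s, r ^ e i ≤ (1 - r)⁻¹ := by
  rw [← Finset.sum_image he, ← tsum_geometric_of_lt_one hr0 hr1]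
  exact (summable_geometric_of_lt_one hr0 hr1).sum_le_tsum _ fun i _ => pow_nonneg hr0 i

-- `Nat.dist k` is injective on each side of `k`.
lemma sum_pow_dist_le (hr0 : 0 ≤ r) (hr1 : r < 1) (s : Finset ℕ) (k : ℕ) :
    ∑ l ∈ s, r ^ Nat.dist k l ≤ 2 / (1 - r) := by
  rw [← Finset.sum_filter_add_sum_filter_not s (· ≤ k)]
  calc _ ≤ (1 - r)⁻¹ + (1 - r)⁻¹ :=
        add_le_add (sum_pow_le_of_injOn hr0 hr1 ?_) (sum_pow_le_of_injOn hr0 hr1 ?_)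
    _ = 2 / (1 - r) := by ring
  all_goals
    intro a ha b hb hab
    simp only [Finset.coe_filter, Set.mem_ofPred_eq] at ha hb
    unfold Nat.dist at hab
    omega

end GeometricSums

lemma integral_sq_sum_le_of_abs_integral_mul_le {Ω : Type*} [MeasurableSpace Ω] {P : Measure Ω}
    {f : ℕ → Ω → ℝ} (hf : ∀ k l, Integrable (fun ω => f k ω * f l ω) P) {C r : ℝ} (hr0 : 0 ≤ r)
    (hr1 : r < 1) (hcorr : ∀ k l, |∫ ω, f k ω * f l ω ∂P| ≤ C * r ^ Nat.dist k l)
    (s : Finset ℕ) :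
    ∫ ω, (∑ k ∈ s, f k ω) ^ 2 ∂P ≤ 2 * C / (1 - r) * #s := by
  have hC : 0 ≤ C := by simpa using (abs_nonneg _).trans (hcorr 0 0)
  calc ∫ ω, (∑ k ∈ s, f k ω) ^ 2 ∂P = ∑ k ∈ s, ∑ l ∈ s, ∫ ω, f k ω * f l ω ∂P := by
        simp_rw [sq, Finset.sum_mul_sum]
        rw [integral_finsetSum _ fun k _ => integrable_finsetSum _ fun l _ => hf k l]
        exact Finset.sum_congr rfl fun k _ => integral_finsetSum _ fun l _ => hf k l
    _ ≤ ∑ k ∈ s, C * (2 / (1 - r)) := by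
        gcongr with k
        calc ∑ l ∈ s, ∫ ω, f k ω * f l ω ∂P ≤ ∑ l ∈ s, C * r ^ Nat.dist k l :=
              Finset.sum_le_sum fun l _ => (le_abs_self _).trans (hcorr k l)
          _ ≤ C * (2 / (1 - r)) := by
              rw [← Finset.mul_sum]
              exact mul_le_mul_of_nonneg_left (sum_pow_dist_le hr0 hr1 s k) hC
    _ = 2 * C / (1 - r) * #s := by
        rw [Finset.sum_const, nsmul_eq_mul]
        ring

/-- mean-square bound, uniform in the time horizon, for ergodic
averages of a stationary Markov chain satisfying a Doeblin minorization
condition.  The Markov chain (with kernel `κ`, invariant initial distribution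
`π`) is encoded by a process `X` on a probability space `(Ω, P)` whose initial
law is `π` and which satisfies the Markov property
`∫_B κ(X_k, A) dP = P(B ∩ X_{k+1}⁻¹ A)` for every `B` measurable with respect
to `σ(X_0, …, X_k)`; the canonical chain of the Ionescu–Tulcea construction is
such a process.  For `g` bounded measurable with `∫ g dπ = 0`,
`E[|∑_{k=1}^M g(X_k)|²] ≤ (1 + 4/ε) M (sup |g|)²`. -/
theorem stmt15
    {U : Type*} [MeasurableSpace U]
    (κ : Kernel U U) [IsMarkovKernel κ]
    (ρ : Measure U) [IsProbabilityMeasure ρ]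
    (ε : ℝ) (hε0 : 0 < ε) (hε1 : ε ≤ 1)
    (hminor : ∀ u : U, ∀ A : Set U, MeasurableSet A →
      ENNReal.ofReal ε * ρ A ≤ κ u A)
    (π : Measure U) [IsProbabilityMeasure π]
    (hinv : ∀ A : Set U, MeasurableSet A → ∫⁻ u, κ u A ∂π = π A)
    {Ω : Type*} [MeasurableSpace Ω]
    (P : Measure Ω) [IsProbabilityMeasure P]
    (X : ℕ → Ω → U) (hXmeas : ∀ k, Measurable (X k))
    (hinit : P.map (X 0) = π)
    (hMarkov : ∀ (k : ℕ) (A : Set U), MeasurableSet A →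
      ∀ B : Set Ω,
        MeasurableSet[⨆ i ∈ Finset.range (k + 1),
          MeasurableSpace.comap (X i) inferInstance] B →
        ∫⁻ ω in B, κ (X k ω) A ∂P = P (B ∩ X (k + 1) ⁻¹' A)) :
    ∀ (g : U → ℝ), Measurable g →
      ∀ Bg : ℝ, (∀ u, |g u| ≤ Bg) →
      (∫ u, g u ∂π) = 0 →
      ∀ M : ℕ,
        (∫ ω, (∑ k ∈ Finset.Icc 1 M, g (X k ω)) ^ 2 ∂P)
          ≤ (1 + 4 / ε) * M * Bg ^ 2 := by
  intro g hg Bg hBg hg0 M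
  have hminor' : ∀ u, ENNReal.ofReal ε • ρ ≤ κ u :=
    fun u => Measure.le_iff.2 fun A hA => by simpa using hminor u A hA
  have hcorr := HasMarkovProperty.abs_integral_mul_le_of_minorization hMarkov hXmeas hε0.le hε1
    hminor' (Kernel.invariant_of_forall_lintegral_eq hinv) hinit hg hBg hg0
  have hint : ∀ k l, Integrable (fun ω => g (X k ω) * g (X l ω)) P := fun k l =>
    integrable_of_forall_abs_le
      ((hg.comp (hXmeas k)).mul (hg.comp (hXmeas l))).aestronglyMeasurable
      fun ω => abs_mul_le_of_forall_abs_le hBg _ _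
  calc _ ≤ 2 * (2 * Bg ^ 2) / (1 - (1 - ε)) * #(Finset.Icc 1 M) :=
        integral_sq_sum_le_of_abs_integral_mul_le hint (by linarith) (by linarith) hcorr _
    _ = 4 / ε * M * Bg ^ 2 := by
        rw [Nat.card_Icc, Nat.add_sub_cancel, sub_sub_cancel]
        ring
    _ ≤ (1 + 4 / ε) * M * Bg ^ 2 := by gcongr; linarith
end

section
/- Let ι be a countable index set, let 0 < p < 1, and let b : ι → [0,∞) with ∑_{ν∈ι} b_ν^p < ∞, and set σ = 1/p − 1/2. Then there exists a nondecreasing sequence (Λ_N)_{N∈ℕ} of finite subsets of ι with card(Λ_N) ≤ N such that for all N ∈ ℕ, ∑_{ν ∈ ι \setminus Λ_N} b_ν² ≤ C N^{−2σ}, where C = ( ∑_{ν∈ι} b_ν^p )^{2/p} is independent of N. -/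
/-! Stechkin's estimate. Put `a = b ^ p` and `S = ∑ a`. Markov's inequality shows that at most
`N` indices satisfy `S < N a_ν`; these indices form `Λ_N`, a set that grows with `N`. Off `Λ_N` we
have `b_ν ^ p ≤ S / N`, so `b_ν ^ 2 = (b_ν ^ p) ^ (2/p - 1) b_ν ^ p ≤ (S / N) ^ (2/p - 1) b_ν ^ p`.
Summing gives a tail of at most `(S / N) ^ (2/p - 1) S = S ^ (2/p) N ^ (1 - 2/p)`. -/

namespace Stechkin

variable {ι : Type*} {a : ι → ℝ}

theorem card_le_of_tsum_lt_mul (ha0 : ∀ i, 0 ≤ a i) (ha : Summable a) {N : ℕ} {s : Finset ι}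
    (hs : ∀ ν ∈ s, ∑' i, a i < N * a ν) : s.card ≤ N := by
  rcases s.eq_empty_or_nonempty with rfl | hne
  · simp
  have hlt : (s.card : ℝ) * ∑' i, a i < N * ∑' i, a i :=
    calc (s.card : ℝ) * ∑' i, a i = ∑ _ν ∈ s, ∑' i, a i := by simp
      _ < ∑ ν ∈ s, N * a ν := Finset.sum_lt_sum_of_nonempty hne hs
      _ = N * ∑ ν ∈ s, a ν := (Finset.mul_sum _ _ _).symm
      _ ≤ N * ∑' i, a i := by
          gcongr
          exact ha.sum_le_tsum s fun i _ => ha0 i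
  exact_mod_cast (lt_of_mul_lt_mul_right hlt (tsum_nonneg ha0)).le

def largeIndices (a : ι → ℝ) (N : ℕ) : Set ι := {ν | ∑' i, a i < N * a ν}

theorem finite_largeIndices (ha0 : ∀ i, 0 ≤ a i) (ha : Summable a) (N : ℕ) :
    (largeIndices a N).Finite := by
  by_contra hinf
  obtain ⟨s, hs, hcard⟩ := Set.Infinite.exists_subset_card_eq hinf (N + 1)
  have := card_le_of_tsum_lt_mul ha0 ha fun ν hν => hs hν
  omega

theorem largeIndices_mono (ha0 : ∀ i, 0 ≤ a i) : Monotone (largeIndices a) :=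
  fun _ _ hNM _ hν => hν.trans_le (mul_le_mul_of_nonneg_right (Nat.cast_le.2 hNM) (ha0 _))

theorem exists_monotone_finset_card_le (ha0 : ∀ i, 0 ≤ a i) (ha : Summable a) :
    ∃ Λ : ℕ → Finset ι, Monotone Λ ∧ (∀ N, (Λ N).card ≤ N) ∧
      ∀ N, ∀ ν ∉ Λ N, N * a ν ≤ ∑' i, a i := by
  refine ⟨fun N => (finite_largeIndices ha0 ha N).toFinset, fun N M hNM => ?_,
    fun N => card_le_of_tsum_lt_mul ha0 ha fun ν hν => ?_, fun N ν hν => ?_⟩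
  · exact Set.Finite.toFinset_subset_toFinset.2 (largeIndices_mono ha0 hNM)
  · exact ((Set.Finite.mem_toFinset _).1 hν : ν ∈ largeIndices a N)
  · simpa [largeIndices] using hν

end Stechkin

theorem Real.rpow_le_rpow_sub_one_mul_rpow {x t p q : ℝ} (hx : 0 ≤ x) (hp : 0 < p) (hpq : p ≤ q)
    (hxt : x ^ p ≤ t) : x ^ q ≤ t ^ (q / p - 1) * x ^ p := by
  have hxp : 0 ≤ x ^ p := Real.rpow_nonneg hx p
  have hexp : 0 ≤ q / p - 1 := by rw [sub_nonneg, le_div_iff₀ hp, one_mul]; exact hpq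
  calc x ^ q = (x ^ p) ^ (q / p - 1 + 1) := by
        rw [sub_add_cancel, ← Real.rpow_mul hx, mul_div_cancel₀ q hp.ne']
    _ = (x ^ p) ^ (q / p - 1) * x ^ p := Real.rpow_add_one' hxp (by linarith)
    _ ≤ t ^ (q / p - 1) * x ^ p := by gcongr

theorem tsum_subtype_rpow_le_of_rpow_le {ι : Type*} {b : ι → ℝ} (hb : ∀ ν, 0 ≤ b ν) {p q t : ℝ}
    (hp : 0 < p) (hpq : p ≤ q) (hsum : Summable fun ν => b ν ^ p) (ht : 0 ≤ t)
    {P : ι → Prop} (hbt : ∀ ν, P ν → b ν ^ p ≤ t) :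
    ∑' ν : {ν // P ν}, b ν ^ q ≤ t ^ (q / p - 1) * ∑' ν, b ν ^ p := by
  have hterm : ∀ ν : {ν // P ν}, b ν ^ q ≤ t ^ (q / p - 1) * b ν ^ p := fun ν =>
    Real.rpow_le_rpow_sub_one_mul_rpow (hb ν) hp hpq (hbt ν ν.2)
  have hsub : Summable fun ν : {ν // P ν} => t ^ (q / p - 1) * b ν ^ p :=
    (hsum.subtype _).mul_left _
  calc ∑' ν : {ν // P ν}, b ν ^ q
      ≤ ∑' ν : {ν // P ν}, t ^ (q / p - 1) * b ν ^ p :=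
        Summable.tsum_le_tsum hterm (hsub.of_nonneg_of_le (fun ν => Real.rpow_nonneg (hb ν) q) hterm) hsub
    _ = t ^ (q / p - 1) * ∑' ν : {ν // P ν}, b ν ^ p := tsum_mul_left
    _ ≤ t ^ (q / p - 1) * ∑' ν, b ν ^ p := by
        gcongr
        exact hsum.tsum_subtype_le _ {ν | P ν} fun ν => Real.rpow_nonneg (hb ν) p

theorem stmt18_general
    {ι : Type*}
    (p : ℝ) (hp0 : 0 < p) (hp1 : p < 1)
    (b : ι → ℝ) (hb : ∀ ν, 0 ≤ b ν)
    (hsum : Summable fun ν => b ν ^ p) :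
    ∃ Λ : ℕ → Finset ι, Monotone Λ ∧ (∀ N, (Λ N).card ≤ N) ∧
      ∀ N : ℕ, 1 ≤ N →
        (∑' ν : {ν : ι // ν ∉ Λ N}, b (ν : ι) ^ 2)
          ≤ (∑' ν, b ν ^ p) ^ (2 / p) *
              (N : ℝ) ^ (-(2 * (1 / p - 1 / 2))) := by
  obtain ⟨Λ, hmono, hcard, hout⟩ :=
    Stechkin.exists_monotone_finset_card_le (fun ν => Real.rpow_nonneg (hb ν) p) hsum
  refine ⟨Λ, hmono, hcard, fun N hN => ?_⟩
  set S := ∑' ν, b ν ^ p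
  have hNpos : (0 : ℝ) < N := by exact_mod_cast hN
  have hS : 0 ≤ S := tsum_nonneg fun ν => Real.rpow_nonneg (hb ν) p
  have htail := tsum_subtype_rpow_le_of_rpow_le hb hp0 (q := 2) (by linarith) hsum
    (div_nonneg hS hNpos.le) (P := fun ν => ν ∉ Λ N)
    fun ν hν => (le_div_iff₀' hNpos).2 (hout N ν hν)
  simp only [Real.rpow_two] at htail
  calc _ ≤ (S / N) ^ (2 / p - 1) * S := htail
    _ = S ^ (2 / p - 1 + 1) * (N : ℝ) ^ (-(2 / p - 1)) := by
        rw [Real.div_rpow hS hNpos.le, Real.rpow_neg hNpos.le, Real.rpow_add_one' hS (by simp [hp0.ne'])]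
        ring
    _ = _ := by ring_nf

/-- Stechkin's lemma / best `N`-term approximation: if
`(b_ν)_{ν ∈ ι}` is nonnegative and `p`-summable with `0 < p < 1`, then there
is a nondecreasing sequence of finite sets `Λ_N ⊆ ι` with `card Λ_N ≤ N` such
that the tail of the squared series is bounded by `C N^{-2σ}` with
`σ = 1/p - 1/2` and `C = (∑ b_ν^p)^{2/p}`. -/
theorem stmt18
    {ι : Type*} [Countable ι]
    (p : ℝ) (hp0 : 0 < p) (hp1 : p < 1)
    (b : ι → ℝ) (hb : ∀ ν, 0 ≤ b ν)
    (hsum : Summable fun ν => b ν ^ p) :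
    ∃ Λ : ℕ → Finset ι, Monotone Λ ∧ (∀ N, (Λ N).card ≤ N) ∧
      ∀ N : ℕ, 1 ≤ N →
        (∑' ν : {ν : ι // ν ∉ Λ N}, b (ν : ι) ^ 2)
          ≤ (∑' ν, b ν ^ p) ^ (2 / p) *
              (N : ℝ) ^ (-(2 * (1 / p - 1 / 2))) :=
  stmt18_general p hp0 hp1 b hb hsum
end
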